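/- arXiv:1601.06674 — 2 statements merged into one kernel-verified Lean document; each statement's English description precedes it below -/
import Mathlib

section
/- Let τ be in the upper half-plane, q = e^{2πiτ}, z ∈ ℂ with z ∉ ℤ + 2τℤ, and ζ = e^{2πiz}. Then R2(ζ;q) = q^{1/8}(ζ^{−1}−1)·(η(2τ)/(η(τ)η(4τ)))·A₂(z, −τ−1/2; 2τ). -/
open Complex Real MeasureTheory BigOperators Finset

noncomputable section

namespace Paper

/-- `q = e^{2πiτ}`. -/
def qp (τ : ℂ) : ℂ := Complex.exp (2 * Real.pi * Complex.I * τ)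

/-- `(ζ; q)_∞ = ∏_{j=0}^∞ (1 - ζ q^j)`. -/
def pochInf (ζ q : ℂ) : ℂ := ∏' j : ℕ, (1 - ζ * q ^ j)

/-- Dedekind's eta function `η(τ) = q^{1/24} (q;q)_∞`. -/
def eta (τ : ℂ) : ℂ :=
  Complex.exp (Real.pi * Complex.I * τ / 12) * pochInf (qp τ) (qp τ)

/-- The root of unity `ζ_c^a = e^{2πia/c}`. -/
def zt (c a : ℤ) : ℂ := Complex.exp (2 * Real.pi * Complex.I * (a : ℂ) / (c : ℂ))

/-- `R2(ζ;q)`, the M₂-rank generating function. -/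
def R2 (ζ q : ℂ) : ℂ :=
  pochInf (-q) (q ^ 2) / pochInf (q ^ 2) (q ^ 2) *
    (1 + ∑' n : ℕ,
      (1 - ζ) * (1 - ζ⁻¹) * (-1 : ℂ) ^ (n + 1) * q ^ (2 * (n + 1) ^ 2 + (n + 1)) *
          (1 + q ^ (2 * (n + 1))) /
        ((1 - ζ * q ^ (2 * (n + 1))) * (1 - ζ⁻¹ * q ^ (2 * (n + 1)))))

/-- The level `ℓ` Appell function `A_ℓ(u,v;τ)`. -/
def appell (ℓ : ℕ) (u v τ : ℂ) : ℂ :=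
  Complex.exp (Real.pi * Complex.I * (ℓ : ℂ) * u) *
    ∑' n : ℤ, (-1 : ℂ) ^ ((ℓ : ℤ) * n) *
        Complex.exp (Real.pi * Complex.I * (ℓ : ℂ) * (n : ℂ) * ((n : ℂ) + 1) * τ +
          2 * Real.pi * Complex.I * (n : ℂ) * v) /
      (1 - Complex.exp (2 * Real.pi * Complex.I * (n : ℂ) * τ + 2 * Real.pi * Complex.I * u))

/-- Jacobi theta function `θ(z;τ)`. -/
def theta (z τ : ℂ) : ℂ :=
  ∑' n : ℤ, Complex.exp (Real.pi * Complex.I * ((n : ℂ) + 1 / 2) ^ 2 * τ +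
    2 * Real.pi * Complex.I * ((n : ℂ) + 1 / 2) * (z + 1 / 2))

/-- Zwegers' function `μ(u,v;τ)`. -/
def mu (u v τ : ℂ) : ℂ :=
  Complex.exp (Real.pi * Complex.I * u) / theta v τ *
    ∑' n : ℤ, (-1 : ℂ) ^ n *
        Complex.exp (Real.pi * Complex.I * (n : ℂ) * ((n : ℂ) + 1) * τ +
          2 * Real.pi * Complex.I * (n : ℂ) * v) /
      (1 - Complex.exp (2 * Real.pi * Complex.I * (n : ℂ) * τ + 2 * Real.pi * Complex.I * u))

/-- `E(x) = 2∫₀^x e^{-πt²} dt`. -/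
def Efun (x : ℝ) : ℝ := 2 * ∫ t in (0:ℝ)..x, Real.exp (-Real.pi * t ^ 2)

/-- Zwegers' nonholomorphic function `R(z;τ)`. -/
def Rz (z τ : ℂ) : ℂ :=
  ∑' n : ℤ,
    (((Real.sign ((n : ℝ) + 1 / 2) -
        Efun (((n : ℝ) + 1 / 2 + z.im / τ.im) * Real.sqrt (2 * τ.im))) : ℝ) : ℂ) *
      (-1 : ℂ) ^ n *
      Complex.exp (-(Real.pi * Complex.I * ((n : ℂ) + 1 / 2) ^ 2 * τ) -
        2 * Real.pi * Complex.I * ((n : ℂ) + 1 / 2) * z)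

/-- Zwegers' completed `μ̃(u,v;τ) = μ(u,v;τ) + (i/2) R(u-v;τ)`. -/
def muTilde (u v τ : ℂ) : ℂ := mu u v τ + Complex.I / 2 * Rz (u - v) τ

/-- The completed level `ℓ` Appell function `Â_ℓ(u,v;τ)`. -/
def appellHat (ℓ : ℕ) (u v τ : ℂ) : ℂ :=
  appell ℓ u v τ + Complex.I / 2 *
    ∑ k ∈ Finset.range ℓ,
      Complex.exp (2 * Real.pi * Complex.I * (k : ℂ) * u) *
        theta (v + (k : ℂ) * τ + ((ℓ : ℂ) - 1) / 2) ((ℓ : ℂ) * τ) *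
        Rz ((ℓ : ℂ) * u - v - (k : ℂ) * τ - ((ℓ : ℂ) - 1) / 2) ((ℓ : ℂ) * τ)

/-- The unary theta function `g_{a,b}(τ)`. -/
def gab (a b : ℝ) (τ : ℂ) : ℂ :=
  ∑' n : ℤ, ((n : ℂ) + (a : ℂ)) *
    Complex.exp (Real.pi * Complex.I * ((n : ℂ) + (a : ℂ)) ^ 2 * τ +
      2 * Real.pi * Complex.I * ((n : ℂ) + (a : ℂ)) * (b : ℂ))

/-- The period integral `∫_{-τ̄}^{i∞} f(w)/√(-i(w+τ)) dw`, along the vertical line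
`w = -τ̄ + it`, `t ∈ (0,∞)`, with the principal branch of the square root. -/
def vint (f : ℂ → ℂ) (τ : ℂ) : ℂ :=
  ∫ t in Set.Ioi (0 : ℝ),
    Complex.I * f (-(starRingEnd ℂ τ) + (t : ℂ) * Complex.I) /
      (-Complex.I * (-(starRingEnd ℂ τ) + (t : ℂ) * Complex.I + τ)) ^ (1 / 2 : ℂ)

/-- `𝓡2(a,c;τ) = q^{-1/8} R2(ζ_c^a; q)`. -/
def curlyR2 (a c : ℤ) (τ : ℂ) : ℂ :=
  Complex.exp (-(Real.pi * Complex.I * τ) / 4) * R2 (zt c a) (qp τ)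

/-- The completed function `𝓡2̃(a,c;τ)`. -/
def curlyR2T (a c : ℤ) (τ : ℂ) : ℂ :=
  curlyR2 a c τ -
    Complex.I * (1 - zt c a) * zt (2 * c) (-a) *
      (Complex.exp (Real.pi * Complex.I / 4) *
          vint (fun w => gab (3 / 4) (1 / 2 - 2 * (a : ℝ) / (c : ℝ)) (4 * w)) τ +
        Complex.exp (-(Real.pi * Complex.I) / 4) *
          vint (fun w => gab (1 / 4) (1 / 2 - 2 * (a : ℝ) / (c : ℝ)) (4 * w)) τ)

/-- The Appell--Lerch type series `S(k,c;τ)`. -/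
def Skc (k c : ℤ) (τ : ℂ) : ℂ :=
  qp τ ^ (-c ^ 2 + 4 * k * c - 2 * k ^ 2 + c - k) /
      (pochInf ((-1 : ℂ) ^ (c - 1) * qp τ ^ (c ^ 2)) (qp τ ^ (4 * c ^ 2)) *
        pochInf ((-1 : ℂ) ^ (c - 1) * qp τ ^ (3 * c ^ 2)) (qp τ ^ (4 * c ^ 2)) *
        pochInf (qp τ ^ (4 * c ^ 2)) (qp τ ^ (4 * c ^ 2))) *
    ∑' n : ℤ, (-1 : ℂ) ^ (n * c) * qp τ ^ (2 * c ^ 2 * n ^ 2 + 3 * c ^ 2 * n) /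
      (1 - qp τ ^ (4 * c ^ 2 * n + (1 + 4 * k - c) * c))

/-- `𝓢(k,c;τ) = i^c q^{-1/8} S(k,c;τ)`. -/
def curlyS (k c : ℤ) (τ : ℂ) : ℂ :=
  Complex.I ^ c * Complex.exp (-(Real.pi * Complex.I * τ) / 4) * Skc k c τ

/-- The completed function `𝓢̃(k,c;τ)`. -/
def curlyST (k c : ℤ) (τ : ℂ) : ℂ :=
  curlyS k c τ - (-1 : ℂ) ^ k * Complex.I ^ (1 + c) *
    Complex.exp (-(Real.pi * Complex.I) / 4) * (c : ℂ) *
    vint (fun w => gab ((1 + 4 * (k : ℝ)) / (4 * (c : ℝ))) ((c : ℝ) / 2)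
      (4 * (c : ℂ) ^ 2 * w)) τ

/-- The Möbius action of an integral matrix on the upper half-plane. -/
def act (M : Matrix (Fin 2) (Fin 2) ℤ) (τ : ℂ) : ℂ :=
  ((M 0 0 : ℂ) * τ + (M 0 1 : ℂ)) / ((M 1 0 : ℂ) * τ + (M 1 1 : ℂ))

/-- `ν` is the eta-multiplier system: for every `B ∈ SL₂(ℤ)` and `τ ∈ ℍ`,
`η(Bτ) = ν(B) √(γτ+δ) η(τ)` with the principal branch of the square root. -/
def IsEtaMultiplier (ν : Matrix (Fin 2) (Fin 2) ℤ → ℂ) : Prop :=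
  ∀ M : Matrix (Fin 2) (Fin 2) ℤ, M.det = 1 →
    ∀ τ : ℂ, 0 < τ.im →
      eta (act M τ) = ν M * ((M 1 0 : ℂ) * τ + (M 1 1 : ℂ)) ^ (1 / 2 : ℂ) * eta τ

/-!
The eta quotient `η(2τ)/(η(τ)η(4τ))` equals `q^{-1/8} (-q;q²)_∞/(q²;q²)_∞`: split `(q;q)_∞` and
`(q²;q²)_∞` into even and odd factors and use `(-q;q²)_∞ (q;q²)_∞ = (q²;q⁴)_∞`.
On the other side, `A₂(z, -τ-1/2; 2τ) = ζ ∑ₙ (-1)ⁿ q^{2n²+n}/(1 - ζq^{2n})`, and adding the terms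
of index `n` and `-n` produces exactly the `n`-th summand of the series defining `R2(ζ;q)`, because the term of
index `-n` is `-ζ⁻¹` times the term of index `n` with `ζ` replaced by `ζ⁻¹`.
-/

open Filter

section Pochhammer

variable {r : ℂ}

lemma norm_pow_lt_one_of_lt_one (hr : ‖r‖ < 1) {n : ℕ} (hn : n ≠ 0) : ‖r ^ n‖ < 1 := by
  rw [norm_pow]; exact pow_lt_one₀ (norm_nonneg r) hr hn

lemma summable_norm_mul_pow (c : ℂ) (hr : ‖r‖ < 1) : Summable fun j : ℕ => ‖c * r ^ j‖ := by
  simpa [norm_mul, norm_pow] using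
    (summable_geometric_of_lt_one (norm_nonneg r) hr).mul_left ‖c‖

lemma multipliable_one_sub_mul_pow (c : ℂ) (hr : ‖r‖ < 1) :
    Multipliable fun j : ℕ => 1 - c * r ^ j := by
  simpa [sub_eq_add_neg] using
    multipliable_one_add_of_summable (f := fun j : ℕ => -(c * r ^ j))
      (by simpa using summable_norm_mul_pow c hr)

lemma pochInf_ne_zero {c : ℂ} (hc : ‖c‖ < 1) (hr : ‖r‖ < 1) : pochInf c r ≠ 0 := by
  have hterm (j : ℕ) : 1 + -(c * r ^ j) ≠ 0 := by
    rw [← sub_eq_add_neg, sub_ne_zero]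
    intro h
    have : ‖c * r ^ j‖ < 1 := by
      rw [norm_mul, norm_pow]
      exact mul_lt_one_of_nonneg_of_lt_one_left (norm_nonneg c) hc
        (pow_le_one₀ (norm_nonneg r) hr.le)
    rw [← h, norm_one] at this
    exact this.false
  simpa [pochInf, sub_eq_add_neg] using
    tprod_one_add_ne_zero_of_summable hterm (by simpa using summable_norm_mul_pow c hr)

lemma pochInf_eq_mul_pochInf_sq (c : ℂ) (hr : ‖r‖ < 1) :
    pochInf c r = pochInf c (r ^ 2) * pochInf (c * r) (r ^ 2) := by
  have hr2 : ‖r ^ 2‖ < 1 := norm_pow_lt_one_of_lt_one hr two_ne_zero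
  have heven (k : ℕ) : 1 - c * r ^ (2 * k) = 1 - c * (r ^ 2) ^ k := by rw [pow_mul]
  have hodd (k : ℕ) : 1 - c * r ^ (2 * k + 1) = 1 - c * r * (r ^ 2) ^ k := by ring
  rw [pochInf, ← tprod_even_mul_odd (f := fun j : ℕ => 1 - c * r ^ j)
    (by simpa only [heven] using multipliable_one_sub_mul_pow c hr2)
    (by simpa only [hodd] using multipliable_one_sub_mul_pow (c * r) hr2)]
  simp only [heven, hodd, pochInf]

lemma pochInf_neg_mul_pochInf (c : ℂ) (hr : ‖r‖ < 1) :
    pochInf (-c) r * pochInf c r = pochInf (c ^ 2) (r ^ 2) := by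
  rw [pochInf, pochInf, ← (multipliable_one_sub_mul_pow (-c) hr).tprod_mul
    (multipliable_one_sub_mul_pow c hr), pochInf]
  exact tprod_congr fun j => by ring

lemma pochInf_neg_mul_pochInf_mul_pochInf {q : ℂ} (hq : ‖q‖ < 1) :
    pochInf (-q) (q ^ 2) * pochInf q q * pochInf (q ^ 4) (q ^ 4) =
      pochInf (q ^ 2) (q ^ 2) ^ 2 := by
  have hq2 : ‖q ^ 2‖ < 1 := norm_pow_lt_one_of_lt_one hq two_ne_zero
  have hsplit₁ : pochInf q q = pochInf q (q ^ 2) * pochInf (q ^ 2) (q ^ 2) := by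
    rw [pochInf_eq_mul_pochInf_sq q hq, ← sq]
  have hsplit₂ : pochInf (q ^ 2) (q ^ 2) = pochInf (q ^ 2) (q ^ 4) * pochInf (q ^ 4) (q ^ 4) := by
    rw [pochInf_eq_mul_pochInf_sq _ hq2, ← pow_mul, ← pow_add]
  calc pochInf (-q) (q ^ 2) * pochInf q q * pochInf (q ^ 4) (q ^ 4)
      = pochInf (-q) (q ^ 2) * pochInf q (q ^ 2) * pochInf (q ^ 2) (q ^ 2) *
          pochInf (q ^ 4) (q ^ 4) := by rw [hsplit₁]; ring
    _ = pochInf (q ^ 2) (q ^ 2) ^ 2 := by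
        rw [pochInf_neg_mul_pochInf q hq2, ← pow_mul, sq (pochInf (q ^ 2) (q ^ 2)), hsplit₂]
        ring

end Pochhammer

lemma qp_natCast_mul (n : ℕ) (τ : ℂ) : qp (n * τ) = qp τ ^ n := by
  rw [qp, qp, ← Complex.exp_nat_mul]
  ring_nf

lemma norm_qp_lt_one {τ : ℂ} (hτ : 0 < τ.im) : ‖qp τ‖ < 1 := by
  rw [qp, Complex.norm_exp, Real.exp_lt_one_iff]
  have : (2 * (Real.pi : ℂ) * Complex.I * τ).re = -(2 * Real.pi * τ.im) := by
    simp [Complex.mul_re]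
  rw [this]
  nlinarith [Real.pi_pos]

lemma eta_two_div_eta_mul_eta_four {τ : ℂ} (hτ : 0 < τ.im) :
    eta (2 * τ) / (eta τ * eta (4 * τ)) =
      Complex.exp (-(Real.pi * Complex.I * τ) / 4) *
        (pochInf (-qp τ) (qp τ ^ 2) / pochInf (qp τ ^ 2) (qp τ ^ 2)) := by
  have hexp : Complex.exp (Real.pi * Complex.I * (2 * τ) / 12) =
      Complex.exp (-(Real.pi * Complex.I * τ) / 4) *
        (Complex.exp (Real.pi * Complex.I * τ / 12) *
          Complex.exp (Real.pi * Complex.I * (4 * τ) / 12)) := by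
    rw [← Complex.exp_add, ← Complex.exp_add]; ring_nf
  rw [eta, eta, eta, hexp, show qp (2 * τ) = qp τ ^ 2 by exact_mod_cast qp_natCast_mul 2 τ,
    show qp (4 * τ) = qp τ ^ 4 by exact_mod_cast qp_natCast_mul 4 τ]
  set q := qp τ
  have hq : ‖q‖ < 1 := norm_qp_lt_one hτ
  have hq₂ := norm_pow_lt_one_of_lt_one hq two_ne_zero
  have hq₄ := norm_pow_lt_one_of_lt_one hq four_ne_zero
  have h₁ := pochInf_ne_zero hq hq
  have h₂ := pochInf_ne_zero hq₂ hq₂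
  have h₄ := pochInf_ne_zero hq₄ hq₄
  field_simp
  rw [← pochInf_neg_mul_pochInf_mul_pochInf hq]
  ring

section AppellTerm

variable {w q : ℂ}

def appellTerm (w q : ℂ) (n : ℤ) : ℂ := (-1) ^ n * q ^ (2 * n ^ 2 + n) / (1 - w * q ^ (2 * n))

lemma appellTerm_natCast (w q : ℂ) (n : ℕ) :
    appellTerm w q n = (-1) ^ n * q ^ (2 * n ^ 2 + n) / (1 - w * q ^ (2 * n)) := by
  simp only [appellTerm]
  norm_cast

lemma appellTerm_neg (hq : q ≠ 0) (hw : w ≠ 0) (n : ℤ) :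
    appellTerm w q (-n) = -w⁻¹ * appellTerm w⁻¹ q n := by
  have hsign : (-1 : ℂ) ^ (-n) = (-1) ^ n := by rw [zpow_neg, ← inv_zpow, inv_neg, inv_one]
  have hnum : q ^ (2 * (-n) ^ 2 + -n) = q ^ (2 * n ^ 2 + n) * (q ^ (2 * n))⁻¹ := by
    rw [← zpow_neg, ← zpow_add₀ hq]; ring_nf
  have hden : 1 - w * q ^ (2 * -n) = -w * (q ^ (2 * n))⁻¹ * (1 - w⁻¹ * q ^ (2 * n)) := by
    rw [mul_neg, zpow_neg]; field_simp; ring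
  rw [appellTerm, appellTerm, hsign, hnum, hden, div_mul_eq_div_div]
  field_simp

lemma summable_appellTerm_natCast (w : ℂ) (hq : ‖q‖ < 1) :
    Summable fun n : ℕ => appellTerm w q n := by
  have hq2 : ‖q ^ 2‖ < 1 := norm_pow_lt_one_of_lt_one hq two_ne_zero
  have hsmall : ∀ᶠ n : ℕ in atTop, ‖w * q ^ (2 * n)‖ < 1 / 2 := by
    have := ((tendsto_pow_atTop_nhds_zero_of_norm_lt_one hq2).const_mul w).norm
    simpa [pow_mul] using this.eventually (gt_mem_nhds (by simp : ‖w * 0‖ < 1 / 2))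
  refine Summable.of_norm_bounded_eventually_nat
    ((summable_geometric_of_lt_one (norm_nonneg q) hq).mul_left 2) ?_
  filter_upwards [hsmall] with n hn
  have hden : 1 / 2 ≤ ‖1 - w * q ^ (2 * n)‖ := by
    linarith [norm_sub_norm_le (1 : ℂ) (w * q ^ (2 * n)), norm_one (α := ℂ)]
  have hnum : ‖(-1 : ℂ) ^ n * q ^ (2 * n ^ 2 + n)‖ ≤ ‖q‖ ^ n := by
    rw [norm_mul, norm_pow, norm_pow, norm_neg, norm_one, one_pow, one_mul]
    exact pow_le_pow_of_le_one (norm_nonneg q) hq.le (by nlinarith)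
  calc ‖appellTerm w q n‖
      = ‖(-1 : ℂ) ^ n * q ^ (2 * n ^ 2 + n)‖ / ‖1 - w * q ^ (2 * n)‖ := by
        rw [appellTerm_natCast, norm_div]
    _ ≤ ‖q‖ ^ n / (1 / 2) := div_le_div₀ (by positivity) hnum (by norm_num) hden
    _ = 2 * ‖q‖ ^ n := by ring

lemma summable_appellTerm (hq : ‖q‖ < 1) (hq₀ : q ≠ 0) (hw : w ≠ 0) :
    Summable (appellTerm w q) :=
  .of_nat_of_neg (summable_appellTerm_natCast w hq) <| by
    simpa only [appellTerm_neg hq₀ hw] using (summable_appellTerm_natCast w⁻¹ hq).mul_left (-w⁻¹)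

lemma one_sub_mul_appellTerm_add_neg (hq : q ≠ 0) (hw : w ≠ 0) (n : ℕ)
    (hA : w * q ^ (2 * n) ≠ 1) (hB : q ^ (2 * n) ≠ w) :
    (1 - w) * (appellTerm w q n + appellTerm w q (-n)) =
      (1 - w) * (1 - w⁻¹) * (-1) ^ n * q ^ (2 * n ^ 2 + n) * (1 + q ^ (2 * n)) /
        ((1 - w * q ^ (2 * n)) * (1 - w⁻¹ * q ^ (2 * n))) := by
  have hA' : 1 - w * q ^ (2 * n) ≠ 0 := sub_ne_zero.2 hA.symm
  have hB' : w - q ^ (2 * n) ≠ 0 := sub_ne_zero.2 hB.symm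
  rw [appellTerm_neg hq hw, appellTerm_natCast, appellTerm_natCast]
  field_simp
  ring

lemma one_sub_mul_tsum_appellTerm (hq : ‖q‖ < 1) (hq₀ : q ≠ 0) (hw₀ : w ≠ 0)
    (hw : ∀ k : ℤ, w * q ^ (2 * k) ≠ 1) :
    (1 - w) * ∑' n : ℤ, appellTerm w q n =
      1 + ∑' n : ℕ,
        (1 - w) * (1 - w⁻¹) * (-1 : ℂ) ^ (n + 1) * q ^ (2 * (n + 1) ^ 2 + (n + 1)) *
            (1 + q ^ (2 * (n + 1))) /
          ((1 - w * q ^ (2 * (n + 1))) * (1 - w⁻¹ * q ^ (2 * (n + 1)))) := by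
  have hA (n : ℕ) : w * q ^ (2 * n) ≠ 1 := by exact_mod_cast hw n
  have hB (n : ℕ) : q ^ (2 * n) ≠ w := by
    intro h
    apply hw (-n)
    rw [mul_neg, zpow_neg]
    norm_cast
    rw [h, mul_inv_cancel₀ hw₀]
  have hs := summable_appellTerm hq hq₀ hw₀
  have hsplit : ∑' n : ℤ, appellTerm w q n = appellTerm w q 0 +
      ∑' n : ℕ, (appellTerm w q ↑(n + 1) + appellTerm w q (-↑(n + 1))) := by
    have h := tsum_nat_add_neg hs
    rw [hs.nat_add_neg.tsum_eq_zero_add] at h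
    simp only [Nat.cast_zero, neg_zero] at h
    linear_combination -h
  have h₀ : (1 - w) * appellTerm w q 0 = 1 := by
    have : 1 - w ≠ 0 := sub_ne_zero.2 (by simpa using (hA 0).symm)
    simp [appellTerm, this]
  rw [hsplit, mul_add, h₀, ← tsum_mul_left]
  exact congrArg _ (tsum_congr fun n => one_sub_mul_appellTerm_add_neg hq₀ hw₀ (n + 1) (hA _) (hB _))

end AppellTerm

lemma appell_two_eq (τ z : ℂ) :
    appell 2 z (-τ - 1 / 2) (2 * τ) =
      Complex.exp (2 * Real.pi * Complex.I * z) *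
        ∑' n : ℤ, appellTerm (Complex.exp (2 * Real.pi * Complex.I * z)) (qp τ) n := by
  rw [appell]
  congr 1
  · push_cast; ring_nf
  refine tsum_congr fun n => ?_
  have hsign : (-1 : ℂ) ^ (((2 : ℕ) : ℤ) * n) = 1 := Even.neg_one_zpow ⟨n, by push_cast; ring⟩
  have hnum : Real.pi * Complex.I * ((2 : ℕ) : ℂ) * n * (n + 1) * (2 * τ) +
      2 * Real.pi * Complex.I * n * (-τ - 1 / 2) =
      ((2 * n ^ 2 + n : ℤ) : ℂ) * (2 * Real.pi * Complex.I * τ) + n * (-(Real.pi * Complex.I)) := by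
    push_cast; ring
  have hden : 2 * Real.pi * Complex.I * n * (2 * τ) + 2 * Real.pi * Complex.I * z =
      ((2 * n : ℤ) : ℂ) * (2 * Real.pi * Complex.I * τ) + 2 * Real.pi * Complex.I * z := by
    push_cast; ring
  have hexp : Complex.exp (-(Real.pi * Complex.I)) = -1 := by
    rw [Complex.exp_neg, Complex.exp_pi_mul_I, inv_neg, inv_one]
  rw [hsign, hnum, hden, Complex.exp_add, Complex.exp_add, Complex.exp_int_mul,
    Complex.exp_int_mul, Complex.exp_int_mul, hexp, appellTerm, qp]
  ring

lemma exp_mul_qp_zpow_ne_one {τ z : ℂ} (hz : ∀ m n : ℤ, z ≠ m + 2 * n * τ) (k : ℤ) :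
    Complex.exp (2 * Real.pi * Complex.I * z) * qp τ ^ (2 * k) ≠ 1 := by
  rw [qp, ← Complex.exp_int_mul, ← Complex.exp_add, Ne, Complex.exp_eq_one_iff]
  rintro ⟨m, hm⟩
  apply hz m (-k)
  have hpi : 2 * (Real.pi : ℂ) * Complex.I ≠ 0 := by simp [Real.pi_ne_zero]
  apply mul_left_cancel₀ hpi
  push_cast at hm ⊢
  linear_combination hm

/-- for `τ ∈ ℍ`, `z ∉ ℤ + 2τℤ`, `ζ = e^{2πiz}`, `q = e^{2πiτ}`,
`R2(ζ;q) = q^{1/8}(ζ⁻¹-1) (η(2τ)/(η(τ)η(4τ))) A₂(z, -τ-1/2; 2τ)`. -/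
theorem statement0 (τ z : ℂ) (hτ : 0 < τ.im)
    (hz : ∀ m n : ℤ, z ≠ (m : ℂ) + 2 * (n : ℂ) * τ) :
    R2 (Complex.exp (2 * Real.pi * Complex.I * z)) (qp τ) =
      Complex.exp (Real.pi * Complex.I * τ / 4) *
        ((Complex.exp (2 * Real.pi * Complex.I * z))⁻¹ - 1) *
        (eta (2 * τ) / (eta τ * eta (4 * τ))) *
        appell 2 z (-τ - 1 / 2) (2 * τ) := by
  set ζ := Complex.exp (2 * Real.pi * Complex.I * z)
  have hζ : ζ ≠ 0 := Complex.exp_ne_zero _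
  rw [eta_two_div_eta_mul_eta_four hτ, appell_two_eq, R2,
    ← one_sub_mul_tsum_appellTerm (norm_qp_lt_one hτ) (Complex.exp_ne_zero _) hζ
      (exp_mul_qp_zpow_ne_one hz)]
  have hq8 : Complex.exp (Real.pi * Complex.I * τ / 4) *
      Complex.exp (-(Real.pi * Complex.I * τ) / 4) = 1 := by
    rw [← Complex.exp_add, ← Complex.exp_zero]; ring_nf
  have hζ' : 1 - ζ = (ζ⁻¹ - 1) * ζ := by field_simp
  rw [hζ']
  linear_combination (-(pochInf (-qp τ) (qp τ ^ 2) / pochInf (qp τ ^ 2) (qp τ ^ 2) *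
    ((ζ⁻¹ - 1) * ζ) * ∑' n : ℤ, appellTerm ζ (qp τ) n)) * hq8

end Paper
end
end

section
/- Let q ∈ ℂ with 0 < |q| < 1 and let ζ ∈ ℂ with ζ ≠ 0 and ζ ≠ q^{2n} for every integer n. Then 1 + Σ_{n=1}^{∞} (1−ζ)(1−ζ^{−1})(−1)^n q^{2n²+n}(1+q^{2n})/((1−ζq^{2n})(1−ζ^{−1}q^{2n})) = (1−ζ)·Σ_{n∈ℤ} (−1)^n q^{2n²+n}/(1−ζq^{2n}). -/
open Complex Real MeasureTheory BigOperators Finset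

noncomputable section

namespace Paper

/-!
Pair the terms `n` and `-n` of the bilateral series. Clearing `q^{-2n}`, the term `-n` has the
same numerator as the term `n` and denominator `q^{2n} - ζ`, and with `x = q^{2n}` the partial
fraction identity `(1 - ζ⁻¹) / (1 - ζ⁻¹ x) = (1 - ζ) / (x - ζ)` turns
`(1 - ζ) (1 / (1 - ζ x) + 1 / (x - ζ))` into the `n`-th term on the left; the term `n = 0`
contributes the `1`.
-/

open Filter Topology

def lambertTerm (q ζ : ℂ) (n : ℤ) : ℂ :=
  (-1 : ℂ) ^ n * q ^ (2 * n ^ 2 + n) / (1 - ζ * q ^ (2 * n))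

lemma partial_fraction_lambert_pair {K : Type*} [Field K] {ζ x : K} (c : K) (hζ : ζ ≠ 0)
    (h₁ : 1 - ζ * x ≠ 0) (h₂ : x - ζ ≠ 0) :
    (1 - ζ) * (1 - ζ⁻¹) * c * (1 + x) / ((1 - ζ * x) * (1 - ζ⁻¹ * x)) =
      (1 - ζ) * (c / (1 - ζ * x) + c / (x - ζ)) := by
  have h₃ : 1 - ζ⁻¹ * x = (x - ζ) * -ζ⁻¹ := by
    field_simp
    ring
  rw [h₃, div_add_div _ _ h₁ h₂]
  field_simp
  ring

lemma _root_.Summable.div_of_tendsto {𝕜 : Type*} [RCLike 𝕜] {a d : ℕ → 𝕜} {L : 𝕜}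
    (ha : Summable a) (hd : Tendsto d atTop (𝓝 L)) (hL : L ≠ 0) :
    Summable fun n ↦ a n / d n := by
  refine summable_of_isBigO_nat' ha ?_
  simpa [div_eq_mul_inv] using
    (Asymptotics.isBigO_refl a atTop).mul ((hd.inv₀ hL).isBigO_one 𝕜)

section LambertTerm

variable {q ζ : ℂ}

lemma lambertTerm_natCast (n : ℕ) :
    lambertTerm q ζ n = (-1 : ℂ) ^ n * q ^ (2 * n ^ 2 + n) / (1 - ζ * q ^ (2 * n)) := by
  simp only [lambertTerm, ← zpow_natCast]
  push_cast
  rfl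

lemma lambertTerm_neg_natCast (hq : q ≠ 0) (n : ℕ) :
    lambertTerm q ζ (-n) = (-1 : ℂ) ^ n * q ^ (2 * n ^ 2 + n) / (q ^ (2 * n) - ζ) := by
  have e₁ :
      2 * (-(n : ℤ)) ^ 2 + -(n : ℤ) = ((2 * n ^ 2 + n : ℕ) : ℤ) - ((2 * n : ℕ) : ℤ) := by
    push_cast
    ring
  have e₂ : 2 * (-(n : ℤ)) = -((2 * n : ℕ) : ℤ) := by
    push_cast
    ring
  have hx : q ^ (2 * n) ≠ 0 := pow_ne_zero _ hq
  have hden : 1 - ζ * (q ^ (2 * n))⁻¹ = (q ^ (2 * n) - ζ) * (q ^ (2 * n))⁻¹ := by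
    rw [sub_mul, mul_inv_cancel₀ hx]
  rw [lambertTerm, e₁, e₂, zpow_sub₀ hq, zpow_neg, zpow_neg]
  simp only [zpow_natCast]
  rw [← inv_pow, inv_neg_one, hden, mul_div_assoc', div_eq_mul_inv _ (q ^ (2 * n)),
    mul_div_mul_right _ _ (inv_ne_zero hx)]

lemma lambert_denominators_ne_zero (hζ : ∀ n : ℤ, ζ ≠ q ^ (2 * n)) (n : ℕ) :
    1 - ζ * q ^ (2 * n) ≠ 0 ∧ q ^ (2 * n) - ζ ≠ 0 := by
  constructor
  · intro h
    apply hζ (-n)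
    rw [mul_neg, zpow_neg, eq_inv_of_mul_eq_one_left (sub_eq_zero.mp h).symm]
    norm_cast
  · intro h
    apply hζ n
    rw [← sub_eq_zero.mp h]
    norm_cast

lemma one_sub_mul_lambertTerm_add_neg (hq : q ≠ 0) (hζ0 : ζ ≠ 0) {n : ℕ}
    (h₁ : 1 - ζ * q ^ (2 * n) ≠ 0) (h₂ : q ^ (2 * n) - ζ ≠ 0) :
    (1 - ζ) * (1 - ζ⁻¹) * (-1 : ℂ) ^ n * q ^ (2 * n ^ 2 + n) * (1 + q ^ (2 * n)) /
        ((1 - ζ * q ^ (2 * n)) * (1 - ζ⁻¹ * q ^ (2 * n))) =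
      (1 - ζ) * (lambertTerm q ζ n + lambertTerm q ζ (-n)) := by
  rw [lambertTerm_natCast, lambertTerm_neg_natCast hq,
    ← partial_fraction_lambert_pair _ hζ0 h₁ h₂]
  ring

lemma summable_neg_one_pow_mul_pow_two_mul_sq_add (hq1 : ‖q‖ < 1) :
    Summable fun n : ℕ ↦ (-1 : ℂ) ^ n * q ^ (2 * n ^ 2 + n) := by
  refine .of_norm_bounded (summable_geometric_of_lt_one (norm_nonneg q) hq1) fun n ↦ ?_
  rw [norm_mul, norm_pow, norm_neg, norm_one, one_pow, one_mul, norm_pow]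
  exact pow_le_pow_of_le_one (norm_nonneg q) hq1.le (by nlinarith)

lemma summable_lambertTerm (hq : q ≠ 0) (hq1 : ‖q‖ < 1) (hζ0 : ζ ≠ 0) :
    Summable (lambertTerm q ζ) := by
  have hq2 : ‖q ^ 2‖ < 1 := by
    simpa using pow_lt_one₀ (norm_nonneg q) hq1 two_ne_zero
  have hpow : Tendsto (fun n : ℕ ↦ q ^ (2 * n)) atTop (𝓝 0) := by
    simpa only [pow_mul] using tendsto_pow_atTop_nhds_zero_of_norm_lt_one hq2
  have hnum := summable_neg_one_pow_mul_pow_two_mul_sq_add hq1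
  rw [summable_int_iff_summable_nat_and_neg]
  constructor
  · simp only [lambertTerm_natCast]
    exact hnum.div_of_tendsto (by simpa using (hpow.const_mul ζ).const_sub 1) one_ne_zero
  · simp only [lambertTerm_neg_natCast hq]
    exact hnum.div_of_tendsto (by simpa using hpow.sub_const ζ) (neg_ne_zero.mpr hζ0)

end LambertTerm

/-- the symmetrization of the Lambert series for the M₂-rank. -/
theorem statement1 (q ζ : ℂ) (hq0 : 0 < ‖q‖) (hq1 : ‖q‖ < 1)
    (hζ0 : ζ ≠ 0) (hζ : ∀ n : ℤ, ζ ≠ q ^ (2 * n)) :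
    1 + ∑' n : ℕ,
        (1 - ζ) * (1 - ζ⁻¹) * (-1 : ℂ) ^ (n + 1) * q ^ (2 * (n + 1) ^ 2 + (n + 1)) *
            (1 + q ^ (2 * (n + 1))) /
          ((1 - ζ * q ^ (2 * (n + 1))) * (1 - ζ⁻¹ * q ^ (2 * (n + 1)))) =
      (1 - ζ) * ∑' n : ℤ, (-1 : ℂ) ^ n * q ^ (2 * n ^ 2 + n) / (1 - ζ * q ^ (2 * n)) := by
  have hq : q ≠ 0 := norm_pos_iff.mp hq0
  have hden := lambert_denominators_ne_zero hζ
  have hsum := summable_lambertTerm hq hq1 hζ0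
  have hzero : (1 - ζ) * lambertTerm q ζ 0 = 1 := by
    simpa [lambertTerm] using mul_inv_cancel₀ (by simpa using (hden 0).1)
  have hpairs := tsum_nat_add_neg hsum
  rw [hsum.nat_add_neg.tsum_eq_zero_add, Nat.cast_zero, neg_zero] at hpairs
  change _ = (1 - ζ) * ∑' n : ℤ, lambertTerm q ζ n
  calc _ = 1 + (1 - ζ) *
        ∑' m : ℕ, (lambertTerm q ζ ↑(m + 1) + lambertTerm q ζ (-↑(m + 1))) := by
        rw [← tsum_mul_left]
        congr 1
        refine tsum_congr fun m ↦ ?_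
        exact one_sub_mul_lambertTerm_add_neg hq hζ0 (hden (m + 1)).1 (hden (m + 1)).2
    _ = (1 - ζ) * ∑' n : ℤ, lambertTerm q ζ n := by
        linear_combination (1 - ζ) * hpairs - hzero

end Paper
end
end
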